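/- Let ℋ be a Hilbert space, f ∈ ℋ, and A ≥ 0 a self-adjoint operator on ℋ. Then for any c > 0 and ε₀ > 0 there exists L > 0 such that the operator inequality f(f, ·) − L(A + ε₀)⁻¹ ≤ c holds, i.e. |(f, g)|² − L (g, (A + ε₀)⁻¹ g) ≤ c‖g‖² for all g ∈ ℋ. -/

import Mathlib

open scoped InnerProductSpace

noncomputable section

/-!
Approximate `f` by a vector `u` of the dense domain of `A` with `2 ‖f - u‖² ≤ c`. Writing
`g = (A + ε₀) y` with `y = R g`, symmetry gives `⟪u, g⟫ = ⟪(A + ε₀) u, y⟫` and positivity gives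
`ε₀ ‖y‖² ≤ re ⟪g, R g⟫`, so `|⟪u, g⟫|² ≤ ‖(A + ε₀) u‖² / ε₀ · re ⟪g, R g⟫`. The remainder
`f - u` costs at most `c ‖g‖²` after splitting `|a + b|² ≤ 2|a|² + 2|b|²`.
-/

lemma norm_inner_sq_le_two_mul_norm_sub_sq_add {E : Type*} [NormedAddCommGroup E]
    [InnerProductSpace ℂ E] (f u g : E) :
    ‖⟪f, g⟫_ℂ‖ ^ 2 ≤ 2 * ‖f - u‖ ^ 2 * ‖g‖ ^ 2 + 2 * ‖⟪u, g⟫_ℂ‖ ^ 2 := by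
  have hsplit : ‖⟪f, g⟫_ℂ‖ ≤ ‖⟪f - u, g⟫_ℂ‖ + ‖⟪u, g⟫_ℂ‖ := by
    simpa [inner_sub_left] using norm_add_le ⟪f - u, g⟫_ℂ ⟪u, g⟫_ℂ
  have hcs : ‖⟪f - u, g⟫_ℂ‖ ≤ ‖f - u‖ * ‖g‖ := norm_inner_le_norm _ _
  nlinarith [norm_nonneg ⟪f, g⟫_ℂ, norm_nonneg ⟪f - u, g⟫_ℂ, norm_nonneg ⟪u, g⟫_ℂ,
    sq_nonneg (‖⟪f - u, g⟫_ℂ‖ - ‖⟪u, g⟫_ℂ‖)]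

namespace LinearPMap

variable {E : Type*} [NormedAddCommGroup E] [InnerProductSpace ℂ E] (A : E →ₗ.[ℂ] E) (ε : ℝ)

lemma inner_add_smul_symm (hsym : ∀ x y : A.domain, ⟪(A x : E), (y : E)⟫_ℂ = ⟪(x : E), A y⟫_ℂ)
    (x y : A.domain) :
    ⟪(x : E), A y + ε • (y : E)⟫_ℂ = ⟪A x + ε • (x : E), (y : E)⟫_ℂ := by
  rw [inner_add_left, inner_add_right, hsym, inner_smul_left_eq_smul, inner_smul_right_eq_smul]

lemma mul_norm_sq_le_re_inner_add_smul (hpos : ∀ x : A.domain, 0 ≤ (⟪(x : E), A x⟫_ℂ).re)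
    (y : A.domain) : ε * ‖(y : E)‖ ^ 2 ≤ (⟪A y + ε • (y : E), (y : E)⟫_ℂ).re := by
  have hA : (⟪(A y : E), (y : E)⟫_ℂ).re = (⟪(y : E), A y⟫_ℂ).re := by
    rw [← inner_conj_symm, Complex.conj_re]
  have hy : (⟪(y : E), (y : E)⟫_ℂ).re = ‖(y : E)‖ ^ 2 := inner_self_eq_norm_sq (𝕜 := ℂ) _
  rw [inner_add_left, inner_smul_left_eq_smul, Complex.add_re, hA, Complex.smul_re, hy,
    smul_eq_mul]
  linarith [hpos y]

variable {ε} (R : E →L[ℂ] E)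

lemma re_inner_apply_nonneg_of_rightInverse
    (hR : ∀ g : E, ∃ hg : R g ∈ A.domain, A ⟨R g, hg⟩ + ε • R g = g)
    (hpos : ∀ x : A.domain, 0 ≤ (⟪(x : E), A x⟫_ℂ).re) (hε : 0 ≤ ε) (g : E) :
    0 ≤ (⟪g, R g⟫_ℂ).re := by
  obtain ⟨hg, hAg⟩ := hR g
  have := A.mul_norm_sq_le_re_inner_add_smul ε hpos ⟨R g, hg⟩
  rw [hAg] at this
  exact le_trans (by positivity) this

lemma norm_inner_sq_le_mul_re_inner_apply
    (hR : ∀ g : E, ∃ hg : R g ∈ A.domain, A ⟨R g, hg⟩ + ε • R g = g)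
    (hsym : ∀ x y : A.domain, ⟪(A x : E), (y : E)⟫_ℂ = ⟪(x : E), A y⟫_ℂ)
    (hpos : ∀ x : A.domain, 0 ≤ (⟪(x : E), A x⟫_ℂ).re) (hε : 0 < ε) (u : A.domain) (g : E) :
    ‖⟪(u : E), g⟫_ℂ‖ ^ 2 ≤ ‖A u + ε • (u : E)‖ ^ 2 / ε * (⟪g, R g⟫_ℂ).re := by
  obtain ⟨hg, hAg⟩ := hR g
  set y : A.domain := ⟨R g, hg⟩
  have hy : ε * ‖(y : E)‖ ^ 2 ≤ (⟪g, R g⟫_ℂ).re := by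
    have := A.mul_norm_sq_le_re_inner_add_smul ε hpos y
    rwa [hAg] at this
  have hcs : ‖⟪(u : E), g⟫_ℂ‖ ≤ ‖A u + ε • (u : E)‖ * ‖(y : E)‖ := by
    rw [← hAg, A.inner_add_smul_symm ε hsym]
    exact norm_inner_le_norm _ _
  rw [div_mul_eq_mul_div, le_div_iff₀ hε]
  calc ‖⟪(u : E), g⟫_ℂ‖ ^ 2 * ε ≤ (‖A u + ε • (u : E)‖ * ‖(y : E)‖) ^ 2 * ε := by gcongr
    _ = ‖A u + ε • (u : E)‖ ^ 2 * (ε * ‖(y : E)‖ ^ 2) := by ring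
    _ ≤ ‖A u + ε • (u : E)‖ ^ 2 * (⟪g, R g⟫_ℂ).re := by gcongr

end LinearPMap

theorem rank_one_dominated_by_resolvent_general
    {ℋ : Type*} [NormedAddCommGroup ℋ] [InnerProductSpace ℂ ℋ]
    (A : ℋ →ₗ.[ℂ] ℋ)
    (hdense : Dense (A.domain : Set ℋ))
    (hsym : ∀ x y : A.domain, ⟪(A x : ℋ), (y : ℋ)⟫_ℂ = ⟪(x : ℋ), (A y : ℋ)⟫_ℂ)
    (hpos : ∀ x : A.domain, 0 ≤ (⟪(x : ℋ), (A x : ℋ)⟫_ℂ).re)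
    (f : ℋ) (c ε₀ : ℝ) (hc : 0 < c) (hε₀ : 0 < ε₀)
    (R : ℋ →L[ℂ] ℋ)
    (hR1 : ∀ y : ℋ, ∃ hy : R y ∈ A.domain, (A ⟨R y, hy⟩ : ℋ) + ε₀ • R y = y) :
    ∃ L : ℝ, 0 < L ∧
      ∀ g : ℋ, ‖⟪f, g⟫_ℂ‖ ^ 2 - L * (⟪g, R g⟫_ℂ).re ≤ c * ‖g‖ ^ 2 := by
  obtain ⟨u, hu, hfu⟩ := hdense.exists_dist_lt f (Real.sqrt_pos.mpr (half_pos hc))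
  have hclose : 2 * ‖f - u‖ ^ 2 ≤ c := by
    have := (Real.lt_sqrt (norm_nonneg _)).mp (dist_eq_norm f u ▸ hfu)
    linarith
  set K := ‖A ⟨u, hu⟩ + ε₀ • u‖ ^ 2 / ε₀
  refine ⟨2 * K + 1, by positivity, fun g => ?_⟩
  have hRg := A.re_inner_apply_nonneg_of_rightInverse R hR1 hpos hε₀.le g
  rw [sub_le_iff_le_add]
  calc ‖⟪f, g⟫_ℂ‖ ^ 2 ≤ 2 * ‖f - u‖ ^ 2 * ‖g‖ ^ 2 + 2 * ‖⟪u, g⟫_ℂ‖ ^ 2 :=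
        norm_inner_sq_le_two_mul_norm_sub_sq_add f u g
    _ ≤ c * ‖g‖ ^ 2 + 2 * (K * (⟪g, R g⟫_ℂ).re) := by
        gcongr
        exact A.norm_inner_sq_le_mul_re_inner_apply R hR1 hsym hpos hε₀ ⟨u, hu⟩ g
    _ ≤ c * ‖g‖ ^ 2 + (2 * K + 1) * (⟪g, R g⟫_ℂ).re := by linarith

/-- **Lemma 17 of the paper (Lemma about shrinking a rank-one perturbation below the
resolvent).**  Let `ℋ` be a Hilbert space, `f ∈ ℋ`, and let `A ≥ 0` be a (possibly unbounded)
nonnegative self-adjoint operator on `ℋ`; for `ε₀ > 0` its resolvent `R = (A + ε₀)⁻¹` is the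
bounded self-adjoint operator characterized by the two inversion identities below.  Then for
any `c > 0` and `ε₀ > 0` there exists `L > 0` such that the operator inequality
`f (f, ·) - L (A + ε₀)⁻¹ ≤ c` holds, i.e.
`|(f, g)|² - L (g, (A + ε₀)⁻¹ g) ≤ c ‖g‖²` for all `g ∈ ℋ`. -/
theorem rank_one_dominated_by_resolvent
    {ℋ : Type*} [NormedAddCommGroup ℋ] [InnerProductSpace ℂ ℋ] [CompleteSpace ℋ]
    (A : ℋ →ₗ.[ℂ] ℋ)
    (hdense : Dense (A.domain : Set ℋ))
    (hsym : ∀ x y : A.domain, ⟪(A x : ℋ), (y : ℋ)⟫_ℂ = ⟪(x : ℋ), (A y : ℋ)⟫_ℂ)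
    (hpos : ∀ x : A.domain, 0 ≤ (⟪(x : ℋ), (A x : ℋ)⟫_ℂ).re)
    (f : ℋ) (c ε₀ : ℝ) (hc : 0 < c) (hε₀ : 0 < ε₀)
    (R : ℋ →L[ℂ] ℋ)
    (hRsa : IsSelfAdjoint R)
    (hR1 : ∀ y : ℋ, ∃ hy : R y ∈ A.domain, (A ⟨R y, hy⟩ : ℋ) + ε₀ • R y = y)
    (hR2 : ∀ x : A.domain, R ((A x : ℋ) + ε₀ • (x : ℋ)) = (x : ℋ)) :
    ∃ L : ℝ, 0 < L ∧
      ∀ g : ℋ, ‖⟪f, g⟫_ℂ‖ ^ 2 - L * (⟪g, R g⟫_ℂ).re ≤ c * ‖g‖ ^ 2 :=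
  rank_one_dominated_by_resolvent_general A hdense hsym hpos f c ε₀ hc hε₀ R hR1
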